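/- arXiv:2108.05411 — 9 statements merged into one kernel-verified Lean document; each statement's English description precedes it below -/
import Mathlib

section
/- Let T : B → A be a λ-weighted relative Rota-Baxter operator. Then the bilinear operation u ·_T v := T(u)·v + u·T(v) + λ u·_B v defines an associative algebra structure on B. -/
/-!
Write `u ⋆ v = T u ▷ v + u ◁ T v + λ u v`. The Rota-Baxter identity says exactly that
`T (u ⋆ v) = T u · T v`, so expanding `u ⋆ (v ⋆ w)` by bilinearity alone gives seven terms. Expanding
`(u ⋆ v) ⋆ w` gives the same seven terms once each is rearranged by one bimodule axiom or by
associativity of `B`.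
-/

namespace RelativeRotaBaxter

variable {k A B : Type*} [CommSemiring k] [AddCommMonoid A] [Module k A]
  [AddCommMonoid B] [Module k B]
  (mA : A →ₗ[k] A →ₗ[k] A) (mB : B →ₗ[k] B →ₗ[k] B)
  (l : A →ₗ[k] B →ₗ[k] B) (r : B →ₗ[k] A →ₗ[k] B) (lam : k) (T : B →ₗ[k] A)

def inducedMul (u v : B) : B :=
  l (T u) v + r u (T v) + lam • mB u v

def inducedMulExpansion (u v w : B) : B :=
  l (T u) (l (T v) w) + l (T u) (r v (T w)) + r u (mA (T v) (T w)) +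
    lam • (l (T u) (mB v w) + mB u (l (T v) w) + mB u (r v (T w))) +
    lam • lam • mB u (mB v w)

variable {mA mB l r lam T}

theorem inducedMul_inducedMul_right
    (hT : ∀ u v, T (inducedMul mB l r lam T u v) = mA (T u) (T v)) (u v w : B) :
    inducedMul mB l r lam T u (inducedMul mB l r lam T v w) =
      inducedMulExpansion mA mB l r lam T u v w := by
  rw [inducedMul, hT, inducedMul]
  simp only [inducedMulExpansion, map_add, map_smul, smul_add]
  abel

theorem inducedMul_inducedMul_left
    (hT : ∀ u v, T (inducedMul mB l r lam T u v) = mA (T u) (T v))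
    (hB : ∀ u v w, mB (mB u v) w = mB u (mB v w))
    (h1 : ∀ a b u, l (mA a b) u = l a (l b u))
    (h2 : ∀ a u b, r (l a u) b = l a (r u b))
    (h3 : ∀ u a b, r (r u a) b = r u (mA a b))
    (c1 : ∀ a u v, mB (l a u) v = l a (mB u v))
    (c2 : ∀ u a v, mB (r u a) v = mB u (l a v))
    (c3 : ∀ u v a, r (mB u v) a = mB u (r v a)) (u v w : B) :
    inducedMul mB l r lam T (inducedMul mB l r lam T u v) w =
      inducedMulExpansion mA mB l r lam T u v w := by
  rw [inducedMul, hT, inducedMul]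
  simp only [inducedMulExpansion, map_add, map_smul, LinearMap.add_apply, LinearMap.smul_apply,
    h1, h2, h3, c1, c2, c3, hB, smul_add]
  abel

end RelativeRotaBaxter

open RelativeRotaBaxter in
theorem weighted_relative_RotaBaxter_induced_product_assoc_general
    {k A B : Type*} [Field k]
    [AddCommGroup A] [Module k A] [AddCommGroup B] [Module k B]
    (mA : A →ₗ[k] A →ₗ[k] A) (mB : B →ₗ[k] B →ₗ[k] B)
    (l : A →ₗ[k] B →ₗ[k] B) (r : B →ₗ[k] A →ₗ[k] B)
    (hB : ∀ u v w, mB (mB u v) w = mB u (mB v w))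
    (h1 : ∀ a b u, l (mA a b) u = l a (l b u))
    (h2 : ∀ a u b, r (l a u) b = l a (r u b))
    (h3 : ∀ u a b, r (r u a) b = r u (mA a b))
    (c1 : ∀ a u v, mB (l a u) v = l a (mB u v))
    (c2 : ∀ u a v, mB (r u a) v = mB u (l a v))
    (c3 : ∀ u v a, r (mB u v) a = mB u (r v a))
    (lam : k) (T : B →ₗ[k] A)
    (hT : ∀ u v : B, mA (T u) (T v) = T (l (T u) v + r u (T v) + lam • mB u v)) :
    ∀ u v w : B,
      (fun (u v : B) => l (T u) v + r u (T v) + lam • mB u v)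
        ((fun (u v : B) => l (T u) v + r u (T v) + lam • mB u v) u v) w
      =
      (fun (u v : B) => l (T u) v + r u (T v) + lam • mB u v) u
        ((fun (u v : B) => l (T u) v + r u (T v) + lam • mB u v) v w) := by
  have hT' : ∀ u v, T (inducedMul mB l r lam T u v) = mA (T u) (T v) := fun u v => (hT u v).symm
  intro u v w
  exact (inducedMul_inducedMul_left hT' hB h1 h2 h3 c1 c2 c3 u v w).trans
    (inducedMul_inducedMul_right hT' u v w).symm

/-- if `T` is a λ-weighted relative Rota-Baxter operator then
`u ·_T v := T(u)·v + u·T(v) + λ u·_B v` is an associative product on `B`. -/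
theorem weighted_relative_RotaBaxter_induced_product_assoc
    {k A B : Type*} [Field k] [CharZero k]
    [AddCommGroup A] [Module k A] [AddCommGroup B] [Module k B]
    (mA : A →ₗ[k] A →ₗ[k] A) (mB : B →ₗ[k] B →ₗ[k] B)
    (l : A →ₗ[k] B →ₗ[k] B) (r : B →ₗ[k] A →ₗ[k] B)
    (hA : ∀ a b c, mA (mA a b) c = mA a (mA b c))
    (hB : ∀ u v w, mB (mB u v) w = mB u (mB v w))
    (h1 : ∀ a b u, l (mA a b) u = l a (l b u))
    (h2 : ∀ a u b, r (l a u) b = l a (r u b))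
    (h3 : ∀ u a b, r (r u a) b = r u (mA a b))
    (c1 : ∀ a u v, mB (l a u) v = l a (mB u v))
    (c2 : ∀ u a v, mB (r u a) v = mB u (l a v))
    (c3 : ∀ u v a, r (mB u v) a = mB u (r v a))
    (lam : k) (T : B →ₗ[k] A)
    (hT : ∀ u v : B, mA (T u) (T v) = T (l (T u) v + r u (T v) + lam • mB u v)) :
    ∀ u v w : B,
      (fun (u v : B) => l (T u) v + r u (T v) + lam • mB u v)
        ((fun (u v : B) => l (T u) v + r u (T v) + lam • mB u v) u v) w
      =
      (fun (u v : B) => l (T u) v + r u (T v) + lam • mB u v) u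
        ((fun (u v : B) => l (T u) v + r u (T v) + lam • mB u v) v w) :=
  weighted_relative_RotaBaxter_induced_product_assoc_general mA mB l r hB h1 h2 h3 c1 c2 c3 lam T hT
end

section
/- Let A be a unital associative algebra and r = Σ r_(1) ⊗ r_(2) ∈ A ⊗ A an element satisfying the λ-weighted associative Yang-Baxter equation r₁₃r₁₂ − r₁₂r₂₃ + r₂₃r₁₃ = λ r₁₃. Then the linear map T : A → A defined by T(a) = Σ r_(1)·a·r_(2) is a (−λ)-weighted Rota-Baxter operator on A, i.e., T(a)·T(b) = T(T(a)·b + a·T(b) − λ a·b) for all a,b. -/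
/-!
Evaluate the weighted associative Yang–Baxter equation under the linear map
`A ⊗ A ⊗ A → A`, `x ⊗ y ⊗ z ↦ x a y b z`. The four terms `r₁₃r₁₂`, `r₁₂r₂₃`, `r₂₃r₁₃`, `r₁₃`
are sent to `T(T(a) b)`, `T(a) T(b)`, `T(a T(b))` and `T(a b)`, which is the Rota–Baxter
identity after rearranging.
-/

open TensorProduct

namespace AYBE

variable (k : Type*) {A ι : Type*} [CommSemiring k] [Ring A] [Algebra k A] [Fintype ι]

def sandwich (r1 r2 : ι → A) : A →ₗ[k] A where
  toFun a := ∑ i, r1 i * a * r2 i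
  map_add' x y := by simp only [mul_add, add_mul, Finset.sum_add_distrib]
  map_smul' c x := by simp only [mul_smul_comm, smul_mul_assoc, Finset.smul_sum, RingHom.id_apply]

theorem sandwich_apply (r1 r2 : ι → A) (a : A) : sandwich k r1 r2 a = ∑ i, r1 i * a * r2 i :=
  rfl

def leg12 (r1 r2 : ι → A) : A ⊗[k] (A ⊗[k] A) := ∑ i, r1 i ⊗ₜ[k] (r2 i ⊗ₜ[k] (1 : A))

def leg13 (r1 r2 : ι → A) : A ⊗[k] (A ⊗[k] A) := ∑ i, r1 i ⊗ₜ[k] ((1 : A) ⊗ₜ[k] r2 i)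

def leg23 (r1 r2 : ι → A) : A ⊗[k] (A ⊗[k] A) := ∑ i, (1 : A) ⊗ₜ[k] (r1 i ⊗ₜ[k] r2 i)

def contract (a b : A) : A ⊗[k] (A ⊗[k] A) →ₗ[k] A :=
  LinearMap.mul' k A ∘ₗ
    map LinearMap.id (LinearMap.mul' k A ∘ₗ map (LinearMap.mulLeft k a) (LinearMap.mulLeft k b))

variable {k}

theorem contract_tmul (a b x y z : A) :
    contract k a b (x ⊗ₜ[k] (y ⊗ₜ[k] z)) = x * a * y * b * z := by
  simp [contract, mul_assoc]

variable (r1 r2 : ι → A) (a b : A)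

theorem contract_leg13_mul_leg12 :
    contract k a b (leg13 k r1 r2 * leg12 k r1 r2) = sandwich k r1 r2 (sandwich k r1 r2 a * b) := by
  simp only [leg13, leg12, Algebra.TensorProduct.tmul_mul_tmul, map_sum,
    contract_tmul, sandwich_apply, Finset.mul_sum, Finset.sum_mul, one_mul, mul_one]
  simp only [mul_assoc]

theorem contract_leg12_mul_leg23 :
    contract k a b (leg12 k r1 r2 * leg23 k r1 r2) = sandwich k r1 r2 a * sandwich k r1 r2 b := by
  simp only [leg12, leg23, Finset.sum_mul_sum, Algebra.TensorProduct.tmul_mul_tmul, map_sum,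
    contract_tmul, sandwich_apply, one_mul, mul_one]
  simp only [mul_assoc]

theorem contract_leg23_mul_leg13 :
    contract k a b (leg23 k r1 r2 * leg13 k r1 r2) = sandwich k r1 r2 (a * sandwich k r1 r2 b) := by
  simp only [leg23, leg13, Algebra.TensorProduct.tmul_mul_tmul, map_sum,
    contract_tmul, sandwich_apply, Finset.mul_sum, Finset.sum_mul, one_mul, mul_one]
  rw [Finset.sum_comm]
  simp only [mul_assoc]

theorem contract_leg13 : contract k a b (leg13 k r1 r2) = sandwich k r1 r2 (a * b) := by
  simp only [leg13, map_sum, contract_tmul, sandwich_apply, mul_one]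
  simp only [mul_assoc]

end AYBE

open AYBE in
theorem weighted_AYBE_gives_weighted_RotaBaxter_general
    {k A : Type*} [Field k] [Ring A] [Algebra k A]
    (lam : k) {ι : Type*} [Fintype ι] (r1 r2 : ι → A)
    (r12 r13 r23 : A ⊗[k] (A ⊗[k] A))
    (hr12 : r12 = ∑ i, (r1 i) ⊗ₜ[k] ((r2 i) ⊗ₜ[k] (1 : A)))
    (hr13 : r13 = ∑ i, (r1 i) ⊗ₜ[k] ((1 : A) ⊗ₜ[k] (r2 i)))
    (hr23 : r23 = ∑ i, (1 : A) ⊗ₜ[k] ((r1 i) ⊗ₜ[k] (r2 i)))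
    (hr : r13 * r12 - r12 * r23 + r23 * r13 = lam • r13) :
    ∀ a b : A,
      (∑ i, r1 i * a * r2 i) * (∑ i, r1 i * b * r2 i)
      = ∑ i, r1 i * ((∑ j, r1 j * a * r2 j) * b + a * (∑ j, r1 j * b * r2 j)
          - lam • (a * b)) * r2 i := by
  intro a b
  have key := congrArg (contract k a b) hr
  rw [hr12, hr13, hr23, ← leg12, ← leg13, ← leg23, map_add, map_sub, map_smul,
    contract_leg13_mul_leg12, contract_leg12_mul_leg23, contract_leg23_mul_leg13,
    contract_leg13] at key
  change sandwich k r1 r2 a * sandwich k r1 r2 b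
    = sandwich k r1 r2 (sandwich k r1 r2 a * b + a * sandwich k r1 r2 b - lam • (a * b))
  rw [map_sub, map_add, map_smul, ← key]
  abel

/-- a solution `r = Σ r₁ᵢ ⊗ r₂ᵢ ∈ A ⊗ A` of the λ-weighted
associative Yang-Baxter equation `r₁₃r₁₂ − r₁₂r₂₃ + r₂₃r₁₃ = λ r₁₃`
(products in `A ⊗ A ⊗ A`) yields the (−λ)-weighted Rota-Baxter operator
`T(a) = Σ r₁ᵢ · a · r₂ᵢ`. -/
theorem weighted_AYBE_gives_weighted_RotaBaxter
    {k A : Type*} [Field k] [CharZero k] [Ring A] [Algebra k A]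
    (lam : k) {ι : Type*} [Fintype ι] (r1 r2 : ι → A)
    (r12 r13 r23 : A ⊗[k] (A ⊗[k] A))
    (hr12 : r12 = ∑ i, (r1 i) ⊗ₜ[k] ((r2 i) ⊗ₜ[k] (1 : A)))
    (hr13 : r13 = ∑ i, (r1 i) ⊗ₜ[k] ((1 : A) ⊗ₜ[k] (r2 i)))
    (hr23 : r23 = ∑ i, (1 : A) ⊗ₜ[k] ((r1 i) ⊗ₜ[k] (r2 i)))
    (hr : r13 * r12 - r12 * r23 + r23 * r13 = lam • r13) :
    ∀ a b : A,
      (∑ i, r1 i * a * r2 i) * (∑ i, r1 i * b * r2 i)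
      = ∑ i, r1 i * ((∑ j, r1 j * a * r2 j) * b + a * (∑ j, r1 j * b * r2 j)
          - lam • (a * b)) * r2 i :=
  weighted_AYBE_gives_weighted_RotaBaxter_general lam r1 r2 r12 r13 r23 hr12 hr13 hr23 hr
end

section
/- Let A, B be associative algebras with B an associative A-bimodule, V = A ⊕ B, and λ a scalar. Then [μ_A + l + r, λμ_B]_G = 0 in the graded Lie algebra of multilinear maps on V with the Gerstenhaber bracket, where μ_A, μ_B are the multiplications of A, B viewed as elements of Hom(V^{⊗2},V) and l, r are the left and right A-actions on B viewed as elements of Hom(V^{⊗2},V). -/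
/-! The `A`-component of the bracket vanishes because `λμ_B` takes values in `B` and `μ_A + l + r`
restricted to `B × V` or `V × B` has no `A`-component. The `B`-component is an alternating sum of
six terms which cancel in pairs by the three compatibilities of `μ_B` with the bimodule actions:
`r (uv) a = u (r v a)`, `(l a u) v = l a (uv)` and `(r u a) v = u (l a v)`. Since these
compatibilities are linear in `μ_B`, it suffices to treat `λ = 1`. -/

/-- `f ∘₁ g - f ∘₂ g`. -/
def preLieComp {V : Type*} [Sub V] (f g : V → V → V) (x y z : V) : V :=
  f (g x y) z - f x (g y z)

def gerstenhaberBracket {V : Type*} [Add V] [Sub V] (f g : V → V → V) (x y z : V) : V :=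
  preLieComp f g x y z + preLieComp g f x y z

section

variable {k A B : Type*} [CommSemiring k]
  [AddCommGroup A] [Module k A] [AddCommGroup B] [Module k B]

/-- `μ_A + l + r` on `A × B`. -/
def semidirectMul (mA : A →ₗ[k] A →ₗ[k] A) (l : A →ₗ[k] B →ₗ[k] B) (r : B →ₗ[k] A →ₗ[k] B)
    (p q : A × B) : A × B :=
  (mA p.1 q.1, l p.1 q.2 + r p.2 q.1)

/-- `μ_B` extended by zero to `A × B`. -/
def fiberMul (mB : B →ₗ[k] B →ₗ[k] B) (p q : A × B) : A × B :=
  (0, mB p.2 q.2)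

structure IsCompatibleMul (l : A →ₗ[k] B →ₗ[k] B) (r : B →ₗ[k] A →ₗ[k] B)
    (mB : B →ₗ[k] B →ₗ[k] B) : Prop where
  left_mul : ∀ a u v, mB (l a u) v = l a (mB u v)
  right_left : ∀ u a v, mB (r u a) v = mB u (l a v)
  mul_right : ∀ u v a, r (mB u v) a = mB u (r v a)

theorem IsCompatibleMul.smul {l : A →ₗ[k] B →ₗ[k] B} {r : B →ₗ[k] A →ₗ[k] B}
    {mB : B →ₗ[k] B →ₗ[k] B} (h : IsCompatibleMul l r mB) (c : k) :
    IsCompatibleMul l r (c • mB) where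
  left_mul a u v := by simp [h.left_mul]
  right_left u a v := by simp [h.right_left]
  mul_right u v a := by simp [h.mul_right]

theorem gerstenhaberBracket_semidirectMul_fiberMul_fst (mA : A →ₗ[k] A →ₗ[k] A)
    (mB : B →ₗ[k] B →ₗ[k] B) (l : A →ₗ[k] B →ₗ[k] B) (r : B →ₗ[k] A →ₗ[k] B) (x y z : A × B) :
    (gerstenhaberBracket (semidirectMul mA l r) (fiberMul mB) x y z).1 = 0 := by
  simp [gerstenhaberBracket, preLieComp, semidirectMul, fiberMul]

theorem gerstenhaberBracket_semidirectMul_fiberMul_snd (mA : A →ₗ[k] A →ₗ[k] A)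
    {mB : B →ₗ[k] B →ₗ[k] B} {l : A →ₗ[k] B →ₗ[k] B} {r : B →ₗ[k] A →ₗ[k] B}
    (h : IsCompatibleMul l r mB) (x y z : A × B) :
    (gerstenhaberBracket (semidirectMul mA l r) (fiberMul mB) x y z).2 = 0 := by
  simp only [gerstenhaberBracket, preLieComp, semidirectMul, fiberMul, Prod.snd_add,
    Prod.snd_sub, map_zero, LinearMap.zero_apply, map_add, LinearMap.add_apply,
    h.left_mul, h.right_left, h.mul_right]
  abel

theorem gerstenhaberBracket_semidirectMul_fiberMul (mA : A →ₗ[k] A →ₗ[k] A)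
    {mB : B →ₗ[k] B →ₗ[k] B} {l : A →ₗ[k] B →ₗ[k] B} {r : B →ₗ[k] A →ₗ[k] B}
    (h : IsCompatibleMul l r mB) (x y z : A × B) :
    gerstenhaberBracket (semidirectMul mA l r) (fiberMul mB) x y z = 0 :=
  Prod.ext (gerstenhaberBracket_semidirectMul_fiberMul_fst mA mB l r x y z)
    (gerstenhaberBracket_semidirectMul_fiberMul_snd mA h x y z)

end

theorem gerstenhaber_bracket_semidirect_compat_general
    {k A B : Type*} [Field k]
    [AddCommGroup A] [Module k A] [AddCommGroup B] [Module k B]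
    (mA : A →ₗ[k] A →ₗ[k] A) (mB : B →ₗ[k] B →ₗ[k] B)
    (l : A →ₗ[k] B →ₗ[k] B) (r : B →ₗ[k] A →ₗ[k] B)
    (c1 : ∀ a u v, mB (l a u) v = l a (mB u v))
    (c2 : ∀ u a v, mB (r u a) v = mB u (l a v))
    (c3 : ∀ u v a, r (mB u v) a = mB u (r v a))
    (lam : k) :
    ∀ x y z : A × B,
      (fun (p q : A × B) => ((mA p.1 q.1, l p.1 q.2 + r p.2 q.1) : A × B))
          ((fun (p q : A × B) => (((0 : A), lam • mB p.2 q.2) : A × B)) x y) z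
        - (fun (p q : A × B) => ((mA p.1 q.1, l p.1 q.2 + r p.2 q.1) : A × B)) x
          ((fun (p q : A × B) => (((0 : A), lam • mB p.2 q.2) : A × B)) y z)
        + ((fun (p q : A × B) => (((0 : A), lam • mB p.2 q.2) : A × B))
            ((fun (p q : A × B) => ((mA p.1 q.1, l p.1 q.2 + r p.2 q.1) : A × B)) x y) z
          - (fun (p q : A × B) => (((0 : A), lam • mB p.2 q.2) : A × B)) x
            ((fun (p q : A × B) => ((mA p.1 q.1, l p.1 q.2 + r p.2 q.1) : A × B)) y z))
      = 0 :=
  gerstenhaberBracket_semidirectMul_fiberMul mA (IsCompatibleMul.smul ⟨c1, c2, c3⟩ lam)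

/-- on `V = A ⊕ B`, the Gerstenhaber bracket of the degree-two
elements `μ_A + l + r` and `λμ_B` vanishes:
`[f,g]_G = f∘₁g − f∘₂g + g∘₁f − g∘₂f = 0`, where
`f = μ_A + l + r` and `g = λμ_B`. -/
theorem gerstenhaber_bracket_semidirect_compat
    {k A B : Type*} [Field k] [CharZero k]
    [AddCommGroup A] [Module k A] [AddCommGroup B] [Module k B]
    (mA : A →ₗ[k] A →ₗ[k] A) (mB : B →ₗ[k] B →ₗ[k] B)
    (l : A →ₗ[k] B →ₗ[k] B) (r : B →ₗ[k] A →ₗ[k] B)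
    (hA : ∀ a b c, mA (mA a b) c = mA a (mA b c))
    (hB : ∀ u v w, mB (mB u v) w = mB u (mB v w))
    (h1 : ∀ a b u, l (mA a b) u = l a (l b u))
    (h2 : ∀ a u b, r (l a u) b = l a (r u b))
    (h3 : ∀ u a b, r (r u a) b = r u (mA a b))
    (c1 : ∀ a u v, mB (l a u) v = l a (mB u v))
    (c2 : ∀ u a v, mB (r u a) v = mB u (l a v))
    (c3 : ∀ u v a, r (mB u v) a = mB u (r v a))
    (lam : k) :
    ∀ x y z : A × B,
      (fun (p q : A × B) => ((mA p.1 q.1, l p.1 q.2 + r p.2 q.1) : A × B))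
          ((fun (p q : A × B) => (((0 : A), lam • mB p.2 q.2) : A × B)) x y) z
        - (fun (p q : A × B) => ((mA p.1 q.1, l p.1 q.2 + r p.2 q.1) : A × B)) x
          ((fun (p q : A × B) => (((0 : A), lam • mB p.2 q.2) : A × B)) y z)
        + ((fun (p q : A × B) => (((0 : A), lam • mB p.2 q.2) : A × B))
            ((fun (p q : A × B) => ((mA p.1 q.1, l p.1 q.2 + r p.2 q.1) : A × B)) x y) z
          - (fun (p q : A × B) => (((0 : A), lam • mB p.2 q.2) : A × B)) x
            ((fun (p q : A × B) => ((mA p.1 q.1, l p.1 q.2 + r p.2 q.1) : A × B)) y z))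
      = 0 :=
  gerstenhaber_bracket_semidirect_compat_general mA mB l r c1 c2 c3 lam
end

section
/- Let T : B → A be a λ-weighted relative Rota-Baxter operator. Then A becomes a bimodule over the induced associative algebra (B, ·_T) with left action l^T_u(a) = T(u)·_A a − T(u·a) and right action r^T_u(a) = a·_A T(u) − T(a·u); i.e., l^T_{u·_T v} = l^T_u ∘ l^T_v, r^T_{u·_T v} = r^T_v ∘ r^T_u, and r^T_v ∘ l^T_u = l^T_u ∘ r^T_v for all u,v ∈ B. -/
/-!
Each identity is checked by expanding both sides. Associativity of `A` brings every product of
two values of `T` into the form `T u · T v`, which the Rota-Baxter identity turns into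
`T (u ·_T v)`; after expanding `·_T`, the terms of the two sides match up pairwise through the
compatibility axioms of the bimodule `B` over `A`.
-/

section
variable {k A B : Type*} [CommRing k] [AddCommGroup A] [Module k A] [AddCommGroup B] [Module k B]
  (mA : A →ₗ[k] A →ₗ[k] A) (mB : B →ₗ[k] B →ₗ[k] B)
  (l : A →ₗ[k] B →ₗ[k] B) (r : B →ₗ[k] A →ₗ[k] B) (lam : k) (T : B →ₗ[k] A)

-- `l a u = a·u` and `r u a = u·a` are the actions of `A` on `B`; these three maps are the
-- paper's `·_T`, `l^T` and `r^T`.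
def inducedMul (u v : B) : B := l (T u) v + r u (T v) + lam • mB u v

def inducedLeft (u : B) (a : A) : A := mA (T u) a - T (r u a)

def inducedRight (u : B) (a : A) : A := mA a (T u) - T (l a u)

variable {mA mB l r lam T}

theorem inducedLeft_inducedMul (hA : ∀ a b c, mA (mA a b) c = mA a (mA b c))
    (h2 : ∀ a u b, r (l a u) b = l a (r u b)) (h3 : ∀ u a b, r (r u a) b = r u (mA a b))
    (c3 : ∀ u v a, r (mB u v) a = mB u (r v a))
    (hT : ∀ u v, mA (T u) (T v) = T (inducedMul mB l r lam T u v)) (u v : B) (a : A) :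
    inducedLeft mA r T (inducedMul mB l r lam T u v) a =
      inducedLeft mA r T u (inducedLeft mA r T v a) := by
  simp only [inducedLeft, map_sub, ← hA, hT]
  simp only [inducedMul, map_add, map_smul, LinearMap.add_apply, LinearMap.smul_apply, h2, h3, c3]
  abel

theorem inducedRight_inducedMul (hA : ∀ a b c, mA (mA a b) c = mA a (mA b c))
    (h1 : ∀ a b u, l (mA a b) u = l a (l b u)) (h2 : ∀ a u b, r (l a u) b = l a (r u b))
    (c1 : ∀ a u v, mB (l a u) v = l a (mB u v))
    (hT : ∀ u v, mA (T u) (T v) = T (inducedMul mB l r lam T u v)) (u v : B) (a : A) :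
    inducedRight mA l T (inducedMul mB l r lam T u v) a =
      inducedRight mA l T v (inducedRight mA l T u a) := by
  simp only [inducedRight, map_sub, LinearMap.sub_apply, hA, hT]
  simp only [inducedMul, map_add, map_smul, h1, h2, c1]
  abel

theorem inducedRight_inducedLeft_comm (hA : ∀ a b c, mA (mA a b) c = mA a (mA b c))
    (h1 : ∀ a b u, l (mA a b) u = l a (l b u)) (h3 : ∀ u a b, r (r u a) b = r u (mA a b))
    (c2 : ∀ u a v, mB (r u a) v = mB u (l a v))
    (hT : ∀ u v, mA (T u) (T v) = T (inducedMul mB l r lam T u v)) (u v : B) (a : A) :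
    inducedRight mA l T v (inducedLeft mA r T u a) =
      inducedLeft mA r T u (inducedRight mA l T v a) := by
  simp only [inducedLeft, inducedRight, map_sub, LinearMap.sub_apply, hA, hT]
  simp only [inducedMul, map_add, map_smul, h1, h3, c2]
  abel
end

theorem weighted_relative_RotaBaxter_induced_bimodule_general
    {k A B : Type*} [Field k]
    [AddCommGroup A] [Module k A] [AddCommGroup B] [Module k B]
    (mA : A →ₗ[k] A →ₗ[k] A) (mB : B →ₗ[k] B →ₗ[k] B)
    (l : A →ₗ[k] B →ₗ[k] B) (r : B →ₗ[k] A →ₗ[k] B)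
    (hA : ∀ a b c, mA (mA a b) c = mA a (mA b c))
    (h1 : ∀ a b u, l (mA a b) u = l a (l b u))
    (h2 : ∀ a u b, r (l a u) b = l a (r u b))
    (h3 : ∀ u a b, r (r u a) b = r u (mA a b))
    (c1 : ∀ a u v, mB (l a u) v = l a (mB u v))
    (c2 : ∀ u a v, mB (r u a) v = mB u (l a v))
    (c3 : ∀ u v a, r (mB u v) a = mB u (r v a))
    (lam : k) (T : B →ₗ[k] A)
    (hT : ∀ u v : B, mA (T u) (T v) = T (l (T u) v + r u (T v) + lam • mB u v)) :
    (∀ (u v : B) (a : A),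
      (fun (u : B) (a : A) => mA (T u) a - T (r u a))
        (l (T u) v + r u (T v) + lam • mB u v) a
      = (fun (u : B) (a : A) => mA (T u) a - T (r u a)) u
          ((fun (u : B) (a : A) => mA (T u) a - T (r u a)) v a))
    ∧
    (∀ (u v : B) (a : A),
      (fun (u : B) (a : A) => mA a (T u) - T (l a u))
        (l (T u) v + r u (T v) + lam • mB u v) a
      = (fun (u : B) (a : A) => mA a (T u) - T (l a u)) v
          ((fun (u : B) (a : A) => mA a (T u) - T (l a u)) u a))
    ∧
    (∀ (u v : B) (a : A),
      (fun (u : B) (a : A) => mA a (T u) - T (l a u)) v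
        ((fun (u : B) (a : A) => mA (T u) a - T (r u a)) u a)
      = (fun (u : B) (a : A) => mA (T u) a - T (r u a)) u
          ((fun (u : B) (a : A) => mA a (T u) - T (l a u)) v a)) :=
  ⟨inducedLeft_inducedMul hA h2 h3 c3 hT, inducedRight_inducedMul hA h1 h2 c1 hT,
    inducedRight_inducedLeft_comm hA h1 h3 c2 hT⟩

/-- for a λ-weighted relative Rota-Baxter operator `T : B → A`,
the maps `l^T_u(a) = T(u)·a − T(u·a)` and `r^T_u(a) = a·T(u) − T(a·u)` make `A`
a bimodule over the induced algebra `(B, ·_T)`. -/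
theorem weighted_relative_RotaBaxter_induced_bimodule
    {k A B : Type*} [Field k] [CharZero k]
    [AddCommGroup A] [Module k A] [AddCommGroup B] [Module k B]
    (mA : A →ₗ[k] A →ₗ[k] A) (mB : B →ₗ[k] B →ₗ[k] B)
    (l : A →ₗ[k] B →ₗ[k] B) (r : B →ₗ[k] A →ₗ[k] B)
    (hA : ∀ a b c, mA (mA a b) c = mA a (mA b c))
    (hB : ∀ u v w, mB (mB u v) w = mB u (mB v w))
    (h1 : ∀ a b u, l (mA a b) u = l a (l b u))
    (h2 : ∀ a u b, r (l a u) b = l a (r u b))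
    (h3 : ∀ u a b, r (r u a) b = r u (mA a b))
    (c1 : ∀ a u v, mB (l a u) v = l a (mB u v))
    (c2 : ∀ u a v, mB (r u a) v = mB u (l a v))
    (c3 : ∀ u v a, r (mB u v) a = mB u (r v a))
    (lam : k) (T : B →ₗ[k] A)
    (hT : ∀ u v : B, mA (T u) (T v) = T (l (T u) v + r u (T v) + lam • mB u v)) :
    (∀ (u v : B) (a : A),
      (fun (u : B) (a : A) => mA (T u) a - T (r u a))
        (l (T u) v + r u (T v) + lam • mB u v) a
      = (fun (u : B) (a : A) => mA (T u) a - T (r u a)) u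
          ((fun (u : B) (a : A) => mA (T u) a - T (r u a)) v a))
    ∧
    (∀ (u v : B) (a : A),
      (fun (u : B) (a : A) => mA a (T u) - T (l a u))
        (l (T u) v + r u (T v) + lam • mB u v) a
      = (fun (u : B) (a : A) => mA a (T u) - T (l a u)) v
          ((fun (u : B) (a : A) => mA a (T u) - T (l a u)) u a))
    ∧
    (∀ (u v : B) (a : A),
      (fun (u : B) (a : A) => mA a (T u) - T (l a u)) v
        ((fun (u : B) (a : A) => mA (T u) a - T (r u a)) u a)
      = (fun (u : B) (a : A) => mA (T u) a - T (r u a)) u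
          ((fun (u : B) (a : A) => mA a (T u) - T (l a u)) v a)) :=
  weighted_relative_RotaBaxter_induced_bimodule_general mA mB l r hA h1 h2 h3 c1 c2 c3 lam T hT
end

section
/- Let T : B → A be a λ-weighted relative Rota-Baxter operator and T_t = T + tT₁ a linear deformation of T (i.e., T + tT₁ is a λ-weighted relative Rota-Baxter operator for all values of t). Then T₁ satisfies T(u)·_A T₁(v) + T₁(u)·_A T(v) = T(T₁(u)·v + u·T₁(v)) + T₁(T(u)·v + u·T(v) + λ u·_B v) for all u,v (i.e., T₁ is a 1-cocycle: d_T(T₁) = 0), and moreover T₁ is a relative Rota-Baxter operator of weight 0: T₁(u)·_A T₁(v) = T₁(T₁(u)·v + u·T₁(v)). -/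
/-!
Both sides of the Rota–Baxter identity for `T + t • T₁` are polynomials of degree at most two
in `t`, with coefficients in `A`. The coefficient of `t` is the cocycle defect of `T₁`, and the
coefficient of `t²` is the weight-zero Rota–Baxter defect of `T₁`. A quadratic vanishing at
`t = 0, 1, -1` has all coefficients zero as soon as `2` is invertible.
-/

theorem Module.coeffs_eq_zero_of_quadratic_eq_zero {k M : Type*} [Field k] [NeZero (2 : k)]
    [AddCommGroup M] [Module k M] {a b c : M} (h : ∀ t : k, a + t • b + t ^ 2 • c = 0) :
    b = 0 ∧ c = 0 := by
  have h0 := h 0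
  have h1 := h 1
  have hm := h (-1)
  simp only [zero_smul, add_zero, one_pow, one_smul, neg_smul, even_two, Even.neg_pow] at h0 h1 hm
  have hb : (2 : k) • b = 0 := by rw [two_smul]; linear_combination (norm := module) h1 - hm
  have hc : (2 : k) • c = 0 := by rw [two_smul]; linear_combination (norm := module) h1 + hm - 2 • h0
  exact ⟨(smul_eq_zero.mp hb).resolve_left two_ne_zero, (smul_eq_zero.mp hc).resolve_left two_ne_zero⟩

section RotaBaxter

variable {k A B : Type*} [CommRing k] [AddCommGroup A] [Module k A] [AddCommGroup B] [Module k B]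
  (mA : A →ₗ[k] A →ₗ[k] A) (mB : B →ₗ[k] B →ₗ[k] B)
  (l : A →ₗ[k] B →ₗ[k] B) (r : B →ₗ[k] A →ₗ[k] B)

/-- `T` is a `lam`-weighted relative Rota–Baxter operator iff this vanishes for all `u v`. -/
def rotaBaxterDefect (lam : k) (T : B →ₗ[k] A) (u v : B) : A :=
  mA (T u) (T v) - T (l (T u) v + r u (T v) + lam • mB u v)

theorem rotaBaxterDefect_add_smul (lam : k) (T T1 : B →ₗ[k] A) (t : k) (u v : B) :
    rotaBaxterDefect mA mB l r lam (T + t • T1) u v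
      = rotaBaxterDefect mA mB l r lam T u v
        + t • ((mA (T u) (T1 v) + mA (T1 u) (T v))
          - (T (l (T1 u) v + r u (T1 v)) + T1 (l (T u) v + r u (T v) + lam • mB u v)))
        + t ^ 2 • rotaBaxterDefect mA mB l r 0 T1 u v := by
  simp only [rotaBaxterDefect, LinearMap.add_apply, LinearMap.smul_apply, map_add, map_smul,
    zero_smul, add_zero]
  module

end RotaBaxter

theorem linear_deformation_cocycle_and_weight_zero_general
    {k A B : Type*} [Field k] [CharZero k]
    [AddCommGroup A] [Module k A] [AddCommGroup B] [Module k B]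
    (mA : A →ₗ[k] A →ₗ[k] A) (mB : B →ₗ[k] B →ₗ[k] B)
    (l : A →ₗ[k] B →ₗ[k] B) (r : B →ₗ[k] A →ₗ[k] B)
    (lam : k) (T T1 : B →ₗ[k] A)
    (hdef : ∀ t : k, ∀ u v : B,
      mA ((T + t • T1) u) ((T + t • T1) v)
      = (T + t • T1) (l ((T + t • T1) u) v + r u ((T + t • T1) v) + lam • mB u v)) :
    (∀ u v : B,
      mA (T u) (T1 v) + mA (T1 u) (T v)
      = T (l (T1 u) v + r u (T1 v))
        + T1 (l (T u) v + r u (T v) + lam • mB u v))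
    ∧
    (∀ u v : B, mA (T1 u) (T1 v) = T1 (l (T1 u) v + r u (T1 v))) := by
  have hcoeffs (u v : B) := Module.coeffs_eq_zero_of_quadratic_eq_zero fun t =>
    (rotaBaxterDefect_add_smul mA mB l r lam T T1 t u v).symm.trans (sub_eq_zero.mpr (hdef t u v))
  refine ⟨fun u v => sub_eq_zero.mp (hcoeffs u v).1, fun u v => ?_⟩
  simpa [rotaBaxterDefect, sub_eq_zero] using (hcoeffs u v).2

/-- if `T_t = T + tT₁` is a λ-weighted relative Rota-Baxter
operator for all values of `t`, then `T₁` is a 1-cocycle for `T`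
(the linearized equation holds) and `T₁` is itself a relative Rota-Baxter
operator of weight 0. -/
theorem linear_deformation_cocycle_and_weight_zero
    {k A B : Type*} [Field k] [CharZero k]
    [AddCommGroup A] [Module k A] [AddCommGroup B] [Module k B]
    (mA : A →ₗ[k] A →ₗ[k] A) (mB : B →ₗ[k] B →ₗ[k] B)
    (l : A →ₗ[k] B →ₗ[k] B) (r : B →ₗ[k] A →ₗ[k] B)
    (hA : ∀ a b c, mA (mA a b) c = mA a (mA b c))
    (hB : ∀ u v w, mB (mB u v) w = mB u (mB v w))
    (h1 : ∀ a b u, l (mA a b) u = l a (l b u))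
    (h2 : ∀ a u b, r (l a u) b = l a (r u b))
    (h3 : ∀ u a b, r (r u a) b = r u (mA a b))
    (c1 : ∀ a u v, mB (l a u) v = l a (mB u v))
    (c2 : ∀ u a v, mB (r u a) v = mB u (l a v))
    (c3 : ∀ u v a, r (mB u v) a = mB u (r v a))
    (lam : k) (T T1 : B →ₗ[k] A)
    (hdef : ∀ t : k, ∀ u v : B,
      mA ((T + t • T1) u) ((T + t • T1) v)
      = (T + t • T1) (l ((T + t • T1) u) v + r u ((T + t • T1) v) + lam • mB u v)) :
    (∀ u v : B,
      mA (T u) (T1 v) + mA (T1 u) (T v)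
      = T (l (T1 u) v + r u (T1 v))
        + T1 (l (T u) v + r u (T v) + lam • mB u v))
    ∧
    (∀ u v : B, mA (T1 u) (T1 v) = T1 (l (T1 u) v + r u (T1 v))) :=
  linear_deformation_cocycle_and_weight_zero_general mA mB l r lam T T1 hdef
end

section
/- Let T_t = Σ_{i=0}^N tⁱTᵢ be an order N deformation of a λ-weighted relative Rota-Baxter operator T (so T₀ = T and the equations d_T(T_n) = −½ Σ_{i+j=n, i,j≥1} ⟦Tᵢ, Tⱼ⟧ hold for n = 0,…,N). Then the 2-cochain Ob_{T_t} := −½ Σ_{i+j=N+1, i,j≥1} ⟦Tᵢ, Tⱼ⟧ is a 2-cocycle: d_T(Ob_{T_t}) = 0. -/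
/-!
Since `d_T` is a derivation of the derived bracket, `d_T⟦Tᵢ, Tⱼ⟧ = -⟦d_T Tᵢ, Tⱼ⟧ - ⟦d_T Tⱼ, Tᵢ⟧`.
Substituting the deformation equations for `d_T Tᵢ` and `d_T Tⱼ` (both indices are at most `N`)
and using the symmetry `i ↔ N + 1 - i` of the index range, `d_T(Ob)` becomes a multiple of
`Σ_{a+b+c=N+1} ⟦⟦T_a, T_b⟧, T_c⟧`. This sum is invariant under rotating `(a, b, c)`, so three
times it is the sum of the cyclic Jacobi sums, which vanish; in characteristic zero this
kills the sum itself.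
-/

section

variable {k A B : Type*} [Field k] [CharZero k]
  [AddCommGroup A] [Module k A] [AddCommGroup B] [Module k B]

/-- The degree-(1,1) derived (graded Lie) bracket `⟦P,Q⟧` on `⊕ₙ Hom(B^{⊗n},A)`. -/
def rbBracket11 (mA : A →ₗ[k] A →ₗ[k] A)
    (l : A →ₗ[k] B →ₗ[k] B) (r : B →ₗ[k] A →ₗ[k] B)
    (P Q : B →ₗ[k] A) : B → B → A :=
  fun u v =>
    P (l (Q u) v) + P (r u (Q v)) + Q (l (P u) v) + Q (r u (P v))
      - mA (P u) (Q v) - mA (Q u) (P v)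

/-- The twisted differential `d_T = d + ⟦T,−⟧` on degree-1 cochains `g : B → A`. -/
def rbDT1 (mA : A →ₗ[k] A →ₗ[k] A) (mB : B →ₗ[k] B →ₗ[k] B)
    (l : A →ₗ[k] B →ₗ[k] B) (r : B →ₗ[k] A →ₗ[k] B)
    (lam : k) (T g : B →ₗ[k] A) : B → B → A :=
  fun u v =>
    T (l (g u) v) + T (r u (g v))
      + g (l (T u) v + r u (T v) + lam • mB u v)
      - mA (T u) (g v) - mA (g u) (T v)

/-- The twisted differential `d_T = d + ⟦T,−⟧` on degree-2 cochains `F : B × B → A`. -/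
def rbDT2 (mA : A →ₗ[k] A →ₗ[k] A) (mB : B →ₗ[k] B →ₗ[k] B)
    (l : A →ₗ[k] B →ₗ[k] B) (r : B →ₗ[k] A →ₗ[k] B)
    (lam : k) (T : B →ₗ[k] A) (F : B → B → A) : B → B → B → A :=
  fun u v w =>
    T (l (F u v) w) - T (r u (F v w))
      - F (l (T u) v + r u (T v) + lam • mB u v) w
      + F u (l (T v) w + r v (T w) + lam • mB v w)
      + mA (T u) (F v w) - mA (F u v) (T w)

/-- The degree-(2,1) derived bracket `⟦F, R⟧` of a 2-cochain `F` with a 1-cochain `R`. -/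
def rbBracket21 (mA : A →ₗ[k] A →ₗ[k] A)
    (l : A →ₗ[k] B →ₗ[k] B) (r : B →ₗ[k] A →ₗ[k] B)
    (F : B → B → A) (R : B →ₗ[k] A) : B → B → B → A :=
  fun u v w =>
    mA (R u) (F v w) - F (l (R u) v) w - F (r u (R v)) w
      + F u (l (R v) w) + F u (r v (R w)) - mA (F u v) (R w)
      + R (l (F u v) w) - R (r u (F v w))

section DerivedBracket

variable (mA : A →ₗ[k] A →ₗ[k] A) (mB : B →ₗ[k] B →ₗ[k] B)
  (l : A →ₗ[k] B →ₗ[k] B) (r : B →ₗ[k] A →ₗ[k] B)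

omit [CharZero k] in
theorem rbDT2_rbBracket11
    (hA : ∀ a b c, mA (mA a b) c = mA a (mA b c))
    (h1 : ∀ a b u, l (mA a b) u = l a (l b u))
    (h2 : ∀ a u b, r (l a u) b = l a (r u b))
    (h3 : ∀ u a b, r (r u a) b = r u (mA a b))
    (c1 : ∀ a u v, mB (l a u) v = l a (mB u v))
    (c2 : ∀ u a v, mB (r u a) v = mB u (l a v))
    (c3 : ∀ u v a, r (mB u v) a = mB u (r v a))
    (lam : k) (T P Q : B →ₗ[k] A) (u v w : B) :
    rbDT2 mA mB l r lam T (rbBracket11 mA l r P Q) u v w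
      = -rbBracket21 mA l r (rbDT1 mA mB l r lam T P) Q u v w
        - rbBracket21 mA l r (rbDT1 mA mB l r lam T Q) P u v w := by
  simp only [rbDT2, rbBracket11, rbDT1, rbBracket21, map_add, map_sub, map_smul,
    LinearMap.add_apply, LinearMap.sub_apply, LinearMap.smul_apply, hA, h1, h2, h3, c1, c2, c3]
  module

omit [CharZero k] in
theorem rbBracket11_jacobi
    (hA : ∀ a b c, mA (mA a b) c = mA a (mA b c))
    (h1 : ∀ a b u, l (mA a b) u = l a (l b u))
    (h2 : ∀ a u b, r (l a u) b = l a (r u b))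
    (h3 : ∀ u a b, r (r u a) b = r u (mA a b))
    (P Q R : B →ₗ[k] A) (u v w : B) :
    rbBracket21 mA l r (rbBracket11 mA l r P Q) R u v w
      + rbBracket21 mA l r (rbBracket11 mA l r Q R) P u v w
      + rbBracket21 mA l r (rbBracket11 mA l r R P) Q u v w = 0 := by
  simp only [rbBracket11, rbBracket21, map_add, map_sub,
    LinearMap.add_apply, LinearMap.sub_apply, hA, h1, h2, h3]
  abel

omit [CharZero k] in
theorem rbDT2_neg_smul_sum (lam : k) (T : B →ₗ[k] A) (c : k) {ι : Type*} (s : Finset ι)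
    (G : ι → B → B → A) (u v w : B) :
    rbDT2 mA mB l r lam T (fun x y => -(c • ∑ i ∈ s, G i x y)) u v w
      = -(c • ∑ i ∈ s, rbDT2 mA mB l r lam T (G i) u v w) := by
  simp only [rbDT2, map_neg, map_smul, map_sum, LinearMap.neg_apply, LinearMap.smul_apply,
    LinearMap.sum_apply, Finset.smul_sum, Finset.sum_add_distrib, Finset.sum_sub_distrib,
    smul_add, smul_sub]
  abel

omit [CharZero k] in
theorem rbBracket21_neg_smul_sum (c : k) {ι : Type*} (s : Finset ι) (G : ι → B → B → A)
    (R : B →ₗ[k] A) (u v w : B) :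
    rbBracket21 mA l r (fun x y => -(c • ∑ i ∈ s, G i x y)) R u v w
      = -(c • ∑ i ∈ s, rbBracket21 mA l r (G i) R u v w) := by
  simp only [rbBracket21, map_neg, map_smul, map_sum, LinearMap.neg_apply, LinearMap.smul_apply,
    LinearMap.sum_apply, Finset.smul_sum, Finset.sum_add_distrib, Finset.sum_sub_distrib,
    smul_add, smul_sub]
  abel

end DerivedBracket

section Compositions

variable {M : Type*} [AddCommMonoid M]

theorem sum_Ioo_sub_swap (n : ℕ) (f : ℕ → ℕ → M) :
    ∑ i ∈ Finset.Ioo 0 n, f i (n - i) = ∑ i ∈ Finset.Ioo 0 n, f (n - i) i := by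
  refine Finset.sum_nbij' (n - ·) (n - ·) ?_ ?_ ?_ ?_ ?_ <;>
    intro i hi <;> simp only [Finset.mem_Ioo] at hi ⊢
  all_goals first | omega | (congr 1; omega)

/-- The double sums run over the positive compositions `a + b + c = n`; this is their rotation
`(a, b, c) ↦ (b, c, a)`. -/
theorem sum_Ioo_sum_Ioo_rotate (n : ℕ) (f : ℕ → ℕ → ℕ → M) :
    ∑ i ∈ Finset.Ioo 0 n, ∑ a ∈ Finset.Ioo 0 i, f a (i - a) (n - i)
      = ∑ i ∈ Finset.Ioo 0 n, ∑ a ∈ Finset.Ioo 0 i, f (i - a) (n - i) a := by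
  rw [Finset.sum_sigma', Finset.sum_sigma']
  refine Finset.sum_nbij' (fun x => ⟨n - x.1 + x.2, n - x.1⟩) (fun x => ⟨n - x.2, x.1 - x.2⟩)
    ?_ ?_ ?_ ?_ ?_ <;> rintro ⟨i, a⟩ h <;>
    simp only [Finset.mem_sigma, Finset.mem_Ioo, Sigma.mk.injEq, heq_eq_eq] at h ⊢
  all_goals first | omega | congr 1 <;> omega

theorem sum_Ioo_sum_Ioo_eq_zero_of_cyclic [IsAddTorsionFree M] (n : ℕ) (f : ℕ → ℕ → ℕ → M)
    (hf : ∀ a b c, f a b c + f b c a + f c a b = 0) :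
    ∑ i ∈ Finset.Ioo 0 n, ∑ a ∈ Finset.Ioo 0 i, f a (i - a) (n - i) = 0 := by
  refine nsmul_right_injective three_ne_zero ?_
  have h1 := sum_Ioo_sum_Ioo_rotate n f
  have h2 : ∑ i ∈ Finset.Ioo 0 n, ∑ a ∈ Finset.Ioo 0 i, f (i - a) (n - i) a
      = ∑ i ∈ Finset.Ioo 0 n, ∑ a ∈ Finset.Ioo 0 i, f (n - i) a (i - a) :=
    sum_Ioo_sum_Ioo_rotate n fun a b c => f b c a
  calc 3 • ∑ i ∈ Finset.Ioo 0 n, ∑ a ∈ Finset.Ioo 0 i, f a (i - a) (n - i)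
      = ∑ i ∈ Finset.Ioo 0 n, ∑ a ∈ Finset.Ioo 0 i,
          (f a (i - a) (n - i) + f (i - a) (n - i) a + f (n - i) a (i - a)) := by
        simp only [Finset.sum_add_distrib]
        rw [← h2, ← h1, succ_nsmul, two_nsmul]
    _ = 3 • 0 := by simp only [hf, Finset.sum_const_zero, smul_zero]

end Compositions

theorem obstruction_is_two_cocycle_general
    (mA : A →ₗ[k] A →ₗ[k] A) (mB : B →ₗ[k] B →ₗ[k] B)
    (l : A →ₗ[k] B →ₗ[k] B) (r : B →ₗ[k] A →ₗ[k] B)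
    (hA : ∀ a b c, mA (mA a b) c = mA a (mA b c))
    (h1 : ∀ a b u, l (mA a b) u = l a (l b u))
    (h2 : ∀ a u b, r (l a u) b = l a (r u b))
    (h3 : ∀ u a b, r (r u a) b = r u (mA a b))
    (c1 : ∀ a u v, mB (l a u) v = l a (mB u v))
    (c2 : ∀ u a v, mB (r u a) v = mB u (l a v))
    (c3 : ∀ u v a, r (mB u v) a = mB u (r v a))
    (lam : k) (N : ℕ) (Ts : ℕ → (B →ₗ[k] A))
    (hdef : ∀ n, 1 ≤ n → n ≤ N → ∀ u v : B,
      rbDT1 mA mB l r lam (Ts 0) (Ts n) u v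
      = -((2:k)⁻¹ •
          ∑ i ∈ Finset.Ioo 0 n, rbBracket11 mA l r (Ts i) (Ts (n - i)) u v)) :
    ∀ u v w : B,
      rbDT2 mA mB l r lam (Ts 0)
        (fun u v =>
          -((2:k)⁻¹ •
            ∑ i ∈ Finset.Ioo 0 (N + 1),
              rbBracket11 mA l r (Ts i) (Ts (N + 1 - i)) u v))
        u v w = 0 := by
  intro u v w
  let jac (a b c : ℕ) : A :=
    rbBracket21 mA l r (rbBracket11 mA l r (Ts a) (Ts b)) (Ts c) u v w
  have hdT : ∀ i ∈ Finset.Ioo 0 (N + 1),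
      rbDT2 mA mB l r lam (Ts 0) (rbBracket11 mA l r (Ts i) (Ts (N + 1 - i))) u v w
        = (2:k)⁻¹ • ∑ a ∈ Finset.Ioo 0 i, jac a (i - a) (N + 1 - i)
          + (2:k)⁻¹ • ∑ a ∈ Finset.Ioo 0 (N + 1 - i), jac a (N + 1 - i - a) i := by
    intro i hi
    rw [Finset.mem_Ioo] at hi
    rw [rbDT2_rbBracket11 mA mB l r hA h1 h2 h3 c1 c2 c3,
      funext₂ (hdef i (by omega) (by omega)), funext₂ (hdef (N + 1 - i) (by omega) (by omega)),
      rbBracket21_neg_smul_sum, rbBracket21_neg_smul_sum, neg_neg, sub_neg_eq_add]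
  have : IsAddTorsionFree A := .of_isTorsionFree k A
  rw [rbDT2_neg_smul_sum, Finset.sum_congr rfl hdT, Finset.sum_add_distrib, ← Finset.smul_sum,
    ← Finset.smul_sum, sum_Ioo_sub_swap (N + 1) fun i j => ∑ a ∈ Finset.Ioo 0 j, jac a (j - a) i,
    sum_Ioo_sum_Ioo_eq_zero_of_cyclic (N + 1) jac fun a b c =>
      rbBracket11_jacobi mA l r hA h1 h2 h3 (Ts a) (Ts b) (Ts c) u v w]
  simp

/-- for an order-`N` deformation `T_t = Σ tⁱ Tᵢ` of a λ-weighted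
relative Rota-Baxter operator `T = T₀`, the obstruction 2-cochain
`Ob = −½ Σ_{i+j=N+1, i,j≥1} ⟦Tᵢ,Tⱼ⟧` is a 2-cocycle: `d_T(Ob) = 0`. -/
theorem obstruction_is_two_cocycle
    (mA : A →ₗ[k] A →ₗ[k] A) (mB : B →ₗ[k] B →ₗ[k] B)
    (l : A →ₗ[k] B →ₗ[k] B) (r : B →ₗ[k] A →ₗ[k] B)
    (hA : ∀ a b c, mA (mA a b) c = mA a (mA b c))
    (hB : ∀ u v w, mB (mB u v) w = mB u (mB v w))
    (h1 : ∀ a b u, l (mA a b) u = l a (l b u))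
    (h2 : ∀ a u b, r (l a u) b = l a (r u b))
    (h3 : ∀ u a b, r (r u a) b = r u (mA a b))
    (c1 : ∀ a u v, mB (l a u) v = l a (mB u v))
    (c2 : ∀ u a v, mB (r u a) v = mB u (l a v))
    (c3 : ∀ u v a, r (mB u v) a = mB u (r v a))
    (lam : k) (N : ℕ) (Ts : ℕ → (B →ₗ[k] A))
    (hT : ∀ u v : B,
      mA (Ts 0 u) (Ts 0 v)
      = Ts 0 (l (Ts 0 u) v + r u (Ts 0 v) + lam • mB u v))
    (hdef : ∀ n, 1 ≤ n → n ≤ N → ∀ u v : B,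
      rbDT1 mA mB l r lam (Ts 0) (Ts n) u v
      = -((2:k)⁻¹ •
          ∑ i ∈ Finset.Ioo 0 n, rbBracket11 mA l r (Ts i) (Ts (n - i)) u v)) :
    ∀ u v w : B,
      rbDT2 mA mB l r lam (Ts 0)
        (fun u v =>
          -((2:k)⁻¹ •
            ∑ i ∈ Finset.Ioo 0 (N + 1),
              rbBracket11 mA l r (Ts i) (Ts (N + 1 - i)) u v))
        u v w = 0 :=
  obstruction_is_two_cocycle_general mA mB l r hA h1 h2 h3 c1 c2 c3 lam N Ts hdef

end
end

section
/- Let T : h → g be a λ-weighted relative Rota-Baxter operator on Lie algebras. Then [u,v]_T := ρ(Tu)v − ρ(Tv)u + λ[u,v]_h defines a Lie algebra structure on h. -/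
/-! The Rota–Baxter identity says that `ρ ∘ T` sends `[·,·]_T` to the commutator of
derivations. Expanding the Leibniz identity for `[·,·]_T`, this cancels the terms where `ρ ∘ T`
is applied to a bracket, the derivation property of each `ρ (T u)` cancels the mixed
terms, and the Jacobi identity of `h` cancels the terms of weight `λ²`. -/

namespace LieDerivation

variable {k g h : Type*} [CommRing k] [LieRing g] [LieAlgebra k g] [LieRing h] [LieAlgebra k h]
  (ρ : g →ₗ⁅k⁆ LieDerivation k h h) (lam : k) (T : h →ₗ[k] g)

def inducedBracket (u v : h) : h := ρ (T u) v - ρ (T v) u + lam • ⁅u, v⁆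

theorem inducedBracket_self (u : h) : inducedBracket ρ lam T u u = 0 := by
  simp [inducedBracket]

variable {ρ lam T}

theorem apply_inducedBracket_apply
    (hT : ∀ u v : h, ⁅T u, T v⁆ = T (inducedBracket ρ lam T u v)) (x y z : h) :
    ρ (T (inducedBracket ρ lam T x y)) z = ρ (T x) (ρ (T y) z) - ρ (T y) (ρ (T x) z) := by
  rw [← hT, LieHom.map_lie, commutator_apply]

theorem inducedBracket_leibniz
    (hT : ∀ u v : h, ⁅T u, T v⁆ = T (inducedBracket ρ lam T u v)) (u v w : h) :
    inducedBracket ρ lam T u (inducedBracket ρ lam T v w) =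
      inducedBracket ρ lam T (inducedBracket ρ lam T u v) w +
        inducedBracket ρ lam T v (inducedBracket ρ lam T u w) := by
  have hρT := apply_inducedBracket_apply hT
  simp only [inducedBracket] at hρT ⊢
  rw [hρT u v w, hρT u w, hρT v w]
  simp only [map_add, map_sub, map_smul, apply_lie_eq_add, lie_add, lie_sub,
    lie_smul, add_lie, sub_lie, smul_lie]
  -- Jacobi identity of `h` for the `λ²` terms
  rw [leibniz_lie u v w, ← lie_skew (ρ (T w) u) v]
  simp only [smul_add, smul_sub, smul_neg, smul_smul]
  abel

end LieDerivation

open LieDerivation in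
theorem lie_weighted_relative_RotaBaxter_induced_bracket_general
    {k g h : Type*} [Field k]
    [LieRing g] [LieAlgebra k g] [LieRing h] [LieAlgebra k h]
    (ρ : g →ₗ⁅k⁆ LieDerivation k h h) (lam : k) (T : h →ₗ[k] g)
    (hT : ∀ u v : h, ⁅T u, T v⁆ = T (ρ (T u) v - ρ (T v) u + lam • ⁅u, v⁆)) :
    (∀ u : h,
      (fun (u v : h) => ρ (T u) v - ρ (T v) u + lam • ⁅u, v⁆) u u = 0)
    ∧
    (∀ u v w : h,
      (fun (u v : h) => ρ (T u) v - ρ (T v) u + lam • ⁅u, v⁆) u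
        ((fun (u v : h) => ρ (T u) v - ρ (T v) u + lam • ⁅u, v⁆) v w)
      =
      (fun (u v : h) => ρ (T u) v - ρ (T v) u + lam • ⁅u, v⁆)
        ((fun (u v : h) => ρ (T u) v - ρ (T v) u + lam • ⁅u, v⁆) u v) w
      +
      (fun (u v : h) => ρ (T u) v - ρ (T v) u + lam • ⁅u, v⁆) v
        ((fun (u v : h) => ρ (T u) v - ρ (T v) u + lam • ⁅u, v⁆) u w)) :=
  ⟨inducedBracket_self ρ lam T, inducedBracket_leibniz hT⟩

/-- for a λ-weighted relative Rota-Baxter operator `T : h → g` on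
Lie algebras, `[u,v]_T := ρ(Tu)v − ρ(Tv)u + λ[u,v]_h` is a Lie bracket on `h`
(alternating and satisfying the Leibniz/Jacobi identity). -/
theorem lie_weighted_relative_RotaBaxter_induced_bracket
    {k g h : Type*} [Field k] [CharZero k]
    [LieRing g] [LieAlgebra k g] [LieRing h] [LieAlgebra k h]
    (ρ : g →ₗ⁅k⁆ LieDerivation k h h) (lam : k) (T : h →ₗ[k] g)
    (hT : ∀ u v : h, ⁅T u, T v⁆ = T (ρ (T u) v - ρ (T v) u + lam • ⁅u, v⁆)) :
    (∀ u : h,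
      (fun (u v : h) => ρ (T u) v - ρ (T v) u + lam • ⁅u, v⁆) u u = 0)
    ∧
    (∀ u v w : h,
      (fun (u v : h) => ρ (T u) v - ρ (T v) u + lam • ⁅u, v⁆) u
        ((fun (u v : h) => ρ (T u) v - ρ (T v) u + lam • ⁅u, v⁆) v w)
      =
      (fun (u v : h) => ρ (T u) v - ρ (T v) u + lam • ⁅u, v⁆)
        ((fun (u v : h) => ρ (T u) v - ρ (T v) u + lam • ⁅u, v⁆) u v) w
      +
      (fun (u v : h) => ρ (T u) v - ρ (T v) u + lam • ⁅u, v⁆) v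
        ((fun (u v : h) => ρ (T u) v - ρ (T v) u + lam • ⁅u, v⁆) u w)) :=
  lie_weighted_relative_RotaBaxter_induced_bracket_general ρ lam T hT
end

section
/- Let T : h → g be a λ-weighted relative Rota-Baxter operator on Lie algebras. Then the map ρ^T : h → End(g) defined by ρ^T(u)(x) = T(ρ(x)u) + [Tu, x]_g is a representation of the Lie algebra (h, [,]_T) on g, i.e., ρ^T([u,v]_T) = ρ^T(u)∘ρ^T(v) − ρ^T(v)∘ρ^T(u) for all u,v ∈ h. -/
/-!
Expanding `ρ^T(u) ρ^T(v) x` with the Rota-Baxter identity applied to `⁅T u, T (ρ x v)⁆`, the term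
`T (ρ (T (ρ x v)) u)` cancels, leaving `T` of an expression in `h` plus `⁅T u, ⁅T v, x⁆⁆`.
In the commutator, Jacobi turns the `g`-parts into `⁅⁅T u, T v⁆, x⁆ = ⁅T [u,v]_T, x⁆`, and the
`h`-parts combine to `ρ x [u,v]_T` because `ρ` is a Lie homomorphism into derivations of `h`.
-/

section RotaBaxter

variable {k g h : Type*} [CommRing k] [LieRing g] [LieAlgebra k g] [LieRing h] [LieAlgebra k h]
  (ρ : g →ₗ⁅k⁆ LieDerivation k h h) (lam : k) (T : h →ₗ[k] g)

/-- The bracket `[u,v]_T` induced on `h`. -/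
def rotaBaxterBracket (u v : h) : h :=
  ρ (T u) v - ρ (T v) u + lam • ⁅u, v⁆

def IsRelativeRotaBaxter : Prop :=
  ∀ u v : h, ⁅T u, T v⁆ = T (rotaBaxterBracket ρ lam T u v)

/-- The map `ρ^T : h → End(g)`. -/
def inducedRep (u : h) (x : g) : g :=
  T (ρ x u) + ⁅T u, x⁆

theorem apply_sub_apply_add_smul_lie (a b x : g) (u v : h) :
    ρ x (ρ a v - ρ b u + lam • ⁅u, v⁆) =
      (ρ ⁅b, x⁆ u + ρ a (ρ x v) + lam • ⁅u, ρ x v⁆) -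
        (ρ ⁅a, x⁆ v + ρ b (ρ x u) + lam • ⁅v, ρ x u⁆) := by
  simp only [LieHom.map_lie, LieDerivation.lie_apply, map_add, map_sub, map_smul,
    LieDerivation.apply_lie_eq_add, ← lie_skew (ρ x u) v]
  module

variable {ρ lam T}

theorem IsRelativeRotaBaxter.inducedRep_inducedRep (hT : IsRelativeRotaBaxter ρ lam T)
    (u v : h) (x : g) :
    inducedRep ρ T u (inducedRep ρ T v x) =
      T (ρ ⁅T v, x⁆ u + ρ (T u) (ρ x v) + lam • ⁅u, ρ x v⁆) + ⁅T u, ⁅T v, x⁆⁆ := by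
  simp only [inducedRep, map_add, map_sub, LieDerivation.add_apply, lie_add, hT u (ρ x v),
    rotaBaxterBracket]
  abel

theorem IsRelativeRotaBaxter.inducedRep_rotaBaxterBracket (hT : IsRelativeRotaBaxter ρ lam T)
    (u v : h) (x : g) :
    inducedRep ρ T (rotaBaxterBracket ρ lam T u v) x =
      inducedRep ρ T u (inducedRep ρ T v x) - inducedRep ρ T v (inducedRep ρ T u x) := by
  rw [hT.inducedRep_inducedRep, hT.inducedRep_inducedRep, inducedRep, ← hT, rotaBaxterBracket,
    apply_sub_apply_add_smul_lie, map_sub, lie_lie]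
  abel

end RotaBaxter

theorem lie_weighted_relative_RotaBaxter_induced_representation_general
    {k g h : Type*} [Field k]
    [LieRing g] [LieAlgebra k g] [LieRing h] [LieAlgebra k h]
    (ρ : g →ₗ⁅k⁆ LieDerivation k h h) (lam : k) (T : h →ₗ[k] g)
    (hT : ∀ u v : h, ⁅T u, T v⁆ = T (ρ (T u) v - ρ (T v) u + lam • ⁅u, v⁆)) :
    ∀ (u v : h) (x : g),
      (fun (u : h) (x : g) => T (ρ x u) + ⁅T u, x⁆)
        (ρ (T u) v - ρ (T v) u + lam • ⁅u, v⁆) x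
      =
      (fun (u : h) (x : g) => T (ρ x u) + ⁅T u, x⁆) u
        ((fun (u : h) (x : g) => T (ρ x u) + ⁅T u, x⁆) v x)
      -
      (fun (u : h) (x : g) => T (ρ x u) + ⁅T u, x⁆) v
        ((fun (u : h) (x : g) => T (ρ x u) + ⁅T u, x⁆) u x) :=
  IsRelativeRotaBaxter.inducedRep_rotaBaxterBracket hT

/-- for a λ-weighted relative Rota-Baxter operator `T : h → g` on
Lie algebras, `ρ^T(u)(x) = T(ρ(x)u) + [Tu,x]` defines a representation of the
induced Lie algebra `(h, [,]_T)` on `g`: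
`ρ^T([u,v]_T) = ρ^T(u)∘ρ^T(v) − ρ^T(v)∘ρ^T(u)`. -/
theorem lie_weighted_relative_RotaBaxter_induced_representation
    {k g h : Type*} [Field k] [CharZero k]
    [LieRing g] [LieAlgebra k g] [LieRing h] [LieAlgebra k h]
    (ρ : g →ₗ⁅k⁆ LieDerivation k h h) (lam : k) (T : h →ₗ[k] g)
    (hT : ∀ u v : h, ⁅T u, T v⁆ = T (ρ (T u) v - ρ (T v) u + lam • ⁅u, v⁆)) :
    ∀ (u v : h) (x : g),
      (fun (u : h) (x : g) => T (ρ x u) + ⁅T u, x⁆)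
        (ρ (T u) v - ρ (T v) u + lam • ⁅u, v⁆) x
      =
      (fun (u : h) (x : g) => T (ρ x u) + ⁅T u, x⁆) u
        ((fun (u : h) (x : g) => T (ρ x u) + ⁅T u, x⁆) v x)
      -
      (fun (u : h) (x : g) => T (ρ x u) + ⁅T u, x⁆) v
        ((fun (u : h) (x : g) => T (ρ x u) + ⁅T u, x⁆) u x) :=
  lie_weighted_relative_RotaBaxter_induced_representation_general ρ lam T hT
end

section
/- Let A and B be associative algebras with B an associative A-bimodule, and let T : B → A be a λ-weighted relative Rota-Baxter operator (associative sense). Then T is also a λ-weighted relative Rota-Baxter operator in the Lie sense: [T(u),T(v)]_{A_c} = T(ρ(Tu)v − ρ(Tv)u + λ[u,v]_{B_c}), where A_c, B_c are the commutator Lie algebras and ρ(a)(u) = a·u − u·a. -/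
theorem associative_weighted_RotaBaxter_is_lie_weighted_RotaBaxter_general
    {k A B : Type*} [Field k]
    [AddCommGroup A] [Module k A] [AddCommGroup B] [Module k B]
    (mA : A →ₗ[k] A →ₗ[k] A) (mB : B →ₗ[k] B →ₗ[k] B)
    (l : A →ₗ[k] B →ₗ[k] B) (r : B →ₗ[k] A →ₗ[k] B)
    (lam : k) (T : B →ₗ[k] A)
    (hT : ∀ u v : B, mA (T u) (T v) = T (l (T u) v + r u (T v) + lam • mB u v)) :
    ∀ u v : B,
      mA (T u) (T v) - mA (T v) (T u)
      = T ((l (T u) v - r v (T u)) - (l (T v) u - r u (T v))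
            + lam • (mB u v - mB v u)) := by
  intro u v
  rw [hT u v, hT v u, ← map_sub]
  congr 1
  rw [smul_sub]
  abel

/-- an associative λ-weighted relative Rota-Baxter operator
`T : B → A` is also a λ-weighted relative Rota-Baxter operator for the
commutator Lie algebras `A_c`, `B_c` and the action `ρ(a)(u) = a·u − u·a`:
`[Tu,Tv]_c = T(ρ(Tu)v − ρ(Tv)u + λ[u,v]_c)`. -/
theorem associative_weighted_RotaBaxter_is_lie_weighted_RotaBaxter
    {k A B : Type*} [Field k] [CharZero k]
    [AddCommGroup A] [Module k A] [AddCommGroup B] [Module k B]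
    (mA : A →ₗ[k] A →ₗ[k] A) (mB : B →ₗ[k] B →ₗ[k] B)
    (l : A →ₗ[k] B →ₗ[k] B) (r : B →ₗ[k] A →ₗ[k] B)
    (hA : ∀ a b c, mA (mA a b) c = mA a (mA b c))
    (hB : ∀ u v w, mB (mB u v) w = mB u (mB v w))
    (h1 : ∀ a b u, l (mA a b) u = l a (l b u))
    (h2 : ∀ a u b, r (l a u) b = l a (r u b))
    (h3 : ∀ u a b, r (r u a) b = r u (mA a b))
    (c1 : ∀ a u v, mB (l a u) v = l a (mB u v))
    (c2 : ∀ u a v, mB (r u a) v = mB u (l a v))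
    (c3 : ∀ u v a, r (mB u v) a = mB u (r v a))
    (lam : k) (T : B →ₗ[k] A)
    (hT : ∀ u v : B, mA (T u) (T v) = T (l (T u) v + r u (T v) + lam • mB u v)) :
    ∀ u v : B,
      mA (T u) (T v) - mA (T v) (T u)
      = T ((l (T u) v - r v (T u)) - (l (T v) u - r u (T v))
            + lam • (mB u v - mB v u)) :=
  associative_weighted_RotaBaxter_is_lie_weighted_RotaBaxter_general mA mB l r lam T hT
end
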